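/- The Laplace mechanism satisfies ε-differential privacy: if M(D) = f(D) + Lap(GS(f)/ε), then for any neighboring databases D_A, D_B and any measurable set S ⊆ ℝ, Pr[M(D_A) ∈ S] ≤ e^ε · Pr[M(D_B) ∈ S]. -/
import Mathlib


open MeasureTheory

/-- Two databases (finite multisets) are neighbors if their symmetric difference has size one. -/
def Neighbors {α : Type*} [DecidableEq α] (D₁ D₂ : Multiset α) : Prop :=
  ((D₁ - D₂) + (D₂ - D₁)).card = 1

/-- `ε`-differential privacy for a randomized mechanism producing a real output. -/
def DiffPrivate {α : Type*} [DecidableEq α] (M : Multiset α → Measure ℝ) (ε : ℝ) : Prop :=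
  ∀ D₁ D₂ : Multiset α, Neighbors D₁ D₂ → ∀ S : Set ℝ, MeasurableSet S →
    M D₁ S ≤ ENNReal.ofReal (Real.exp ε) * M D₂ S

/-- The Laplace mechanism with center `c` and scale `λ`: Lebesgue measure with
Laplace density centered at `c`. -/
noncomputable def laplaceMech (lam c : ℝ) : Measure ℝ :=
  volume.withDensity (fun x => ENNReal.ofReal ((1 / (2 * lam)) * Real.exp (-|x - c| / lam)))

/-- The Laplace mechanism `M(D) = f(D) + Lap(GS(f)/ε)` satisfies `ε`-differential privacy. -/
theorem laplace_mechanism_dp {α : Type*} [DecidableEq α] (f : Multiset α → ℝ) (ε Δ : ℝ)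
    (hε : 0 < ε) (hΔ : 0 < Δ)
    (hGS : ∀ D₁ D₂ : Multiset α, Neighbors D₁ D₂ → |f D₁ - f D₂| ≤ Δ) :
    DiffPrivate (fun D => laplaceMech (Δ / ε) (f D)) ε := by
  intro D₁ D₂ hN S hS
  have hlam : (0:ℝ) < Δ / ε := div_pos hΔ hε
  set lam := Δ / ε with hlamdef
  set c₁ := f D₁
  set c₂ := f D₂
  have hcd : |c₁ - c₂| ≤ Δ := hGS D₁ D₂ hN
  -- pointwise density bound
  have hpt : ∀ x : ℝ,
      ENNReal.ofReal ((1 / (2 * lam)) * Real.exp (-|x - c₁| / lam)) ≤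
      ENNReal.ofReal (Real.exp ε) *
        ENNReal.ofReal ((1 / (2 * lam)) * Real.exp (-|x - c₂| / lam)) := by
    intro x
    rw [← ENNReal.ofReal_mul (Real.exp_pos ε).le]
    apply ENNReal.ofReal_le_ofReal
    rw [mul_comm (Real.exp ε), mul_assoc]
    apply mul_le_mul_of_nonneg_left _ (by positivity)
    rw [← Real.exp_add]
    apply Real.exp_le_exp.mpr
    have h1 : |x - c₁| ≥ |x - c₂| - Δ := by
      have := abs_sub_abs_le_abs_sub (x - c₂) (x - c₁)
      have h2 : |x - c₂ - (x - c₁)| = |c₁ - c₂| := by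
        rw [show x - c₂ - (x - c₁) = c₁ - c₂ by ring]
      linarith [this, h2 ▸ this, hcd]
    rw [div_add' _ _ _ hlam.ne', div_le_div_iff₀ hlam hlam]
    have hle : ε * lam = Δ := by
      rw [hlamdef]; field_simp
    nlinarith [hlam]
  calc laplaceMech lam c₁ S
      ≤ (volume.withDensity fun x => ENNReal.ofReal (Real.exp ε) *
          ENNReal.ofReal ((1 / (2 * lam)) * Real.exp (-|x - c₂| / lam))) S := by
        exact withDensity_mono (Filter.Eventually.of_forall hpt) S
    _ = ENNReal.ofReal (Real.exp ε) * laplaceMech lam c₂ S := by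
        have := withDensity_smul' (μ := (volume : Measure ℝ)) (ENNReal.ofReal (Real.exp ε))
          (fun x => ENNReal.ofReal ((1 / (2 * lam)) * Real.exp (-|x - c₂| / lam)))
          ENNReal.ofReal_ne_top
        have h2 : (fun x => ENNReal.ofReal (Real.exp ε) *
            ENNReal.ofReal ((1 / (2 * lam)) * Real.exp (-|x - c₂| / lam))) =
            ENNReal.ofReal (Real.exp ε) •
            (fun x => ENNReal.ofReal ((1 / (2 * lam)) * Real.exp (-|x - c₂| / lam))) := rfl
        rw [h2, this, laplaceMech]
        simp
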